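/- Full-gradient RED convergence (the b = 1 case): let g : ℝ^n → ℝ be convex and continuously differentiable with L-Lipschitz gradient, let D : ℝ^n → ℝ^n be nonexpansive, let τ > 0, and set G(x) = ∇g(x) + τ(x − D(x)). Assume zer(G) is nonempty and ‖x⁰ − x*‖ ≤ R₀ for some x* ∈ zer(G). Run x^k = x^{k−1} − γ G(x^{k−1}) with 0 < γ ≤ 1/(L + 2τ). Then for all t ≥ 1, min_{k ∈ {1,…,t}} ‖G(x^{k-1})‖² ≤ (1/t) Σ_{k=1}^{t} ‖G(x^{k-1})‖² ≤ ((L + 2τ)/(γ t)) R₀². -/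

import Mathlib

/-!
Both summands of `G` are cocoercive: `∇g` is `1/L`-cocoercive by the Baillon–Haddad theorem
(supporting hyperplane of the convex `g` combined with the descent lemma), and `I - D` is
`1/2`-cocoercive because `D` is nonexpansive. Reciprocal cocoercivity constants add, so `G` is
`1/(L + 2τ)`-cocoercive. For such an operator with zero `x*`, a forward step of size
`γ ≤ 1/(L + 2τ)` lowers `‖x - x*‖²` by at least `γ/(L + 2τ) ‖G x‖²`; telescoping bounds the
sum of the `‖G (x^k)‖²` by `(L + 2τ)/γ · R₀²`, and the minimum is at most the average.
-/

open scoped RealInnerProductSpace BigOperators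

variable {E : Type*} [NormedAddCommGroup E] [InnerProductSpace ℝ E]

/-- The constant is the reciprocal of the usual one: `T` is `1/c`-cocoercive in the usual sense. -/
def CocoerciveWith (c : ℝ) (T : E → E) : Prop :=
  ∀ x y, ‖T x - T y‖ ^ 2 ≤ c * ⟪T x - T y, x - y⟫

namespace CocoerciveWith

variable {a b c : ℝ} {T S : E → E}

theorem smul (hT : CocoerciveWith c T) (r : ℝ) : CocoerciveWith (r * c) (r • T) := by
  intro x y
  simp only [Pi.smul_apply, ← smul_sub, norm_smul, mul_pow, Real.norm_eq_abs, sq_abs,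
    real_inner_smul_left]
  calc r ^ 2 * ‖T x - T y‖ ^ 2 ≤ r ^ 2 * (c * ⟪T x - T y, x - y⟫) := by
        gcongr; exact hT x y
    _ = r * c * (r * ⟪T x - T y, x - y⟫) := by ring

theorem add (ha : 0 < a) (hb : 0 < b) (hT : CocoerciveWith a T) (hS : CocoerciveWith b S) :
    CocoerciveWith (a + b) (T + S) := by
  intro x y
  have hsplit : (T + S) x - (T + S) y = (T x - T y) + (S x - S y) := by
    simp only [Pi.add_apply]; abel
  rw [hsplit, inner_add_left]
  set u := T x - T y
  set v := S x - S y
  have hu := hT x y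
  have hv := hS x y
  have htri : ‖u + v‖ ^ 2 ≤ (‖u‖ + ‖v‖) ^ 2 := by gcongr; exact norm_add_le u v
  -- weighted Cauchy–Schwarz: `a b (p + q)² ≤ (a + b) (b p² + a q²)`, with defect `(b p - a q)²`
  have hweighted : a * b * (‖u‖ + ‖v‖) ^ 2 ≤ a * b * ((a + b) * (⟪u, x - y⟫ + ⟪v, x - y⟫)) := by
    nlinarith [sq_nonneg (b * ‖u‖ - a * ‖v‖),
      mul_le_mul_of_nonneg_left hu (by positivity : 0 ≤ b * (a + b)),
      mul_le_mul_of_nonneg_left hv (by positivity : 0 ≤ a * (a + b))]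
  exact htri.trans (le_of_mul_le_mul_left hweighted (mul_pos ha hb))

theorem norm_sub_smul_sub_sq_add_le (hT : CocoerciveWith c T) (hc : 0 < c) {xs : E}
    (hxs : T xs = 0) {γ : ℝ} (hγ : 0 ≤ γ) (hγc : γ ≤ 1 / c) (x : E) :
    ‖x - γ • T x - xs‖ ^ 2 + γ / c * ‖T x‖ ^ 2 ≤ ‖x - xs‖ ^ 2 := by
  have h := hT x xs
  rw [hxs, sub_zero] at h
  rw [sub_right_comm, norm_sub_sq_real, real_inner_smul_right, norm_smul, Real.norm_eq_abs,
    abs_of_nonneg hγ, real_inner_comm]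
  have hcoco : γ / c * ‖T x‖ ^ 2 ≤ γ * ⟪T x, x - xs⟫ := by
    rw [div_mul_eq_mul_div, div_le_iff₀ hc, mul_assoc]
    exact mul_le_mul_of_nonneg_left (by linarith) hγ
  have hsq : (γ * ‖T x‖) ^ 2 ≤ γ / c * ‖T x‖ ^ 2 :=
    calc (γ * ‖T x‖) ^ 2 = γ * ‖T x‖ ^ 2 * γ := by ring
      _ ≤ γ * ‖T x‖ ^ 2 * (1 / c) := by gcongr
      _ = γ / c * ‖T x‖ ^ 2 := by ring
  linarith

theorem sum_range_norm_sq_le (hT : CocoerciveWith c T) (hc : 0 < c) {xs : E} (hxs : T xs = 0)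
    {γ : ℝ} (hγ : 0 ≤ γ) (hγc : γ ≤ 1 / c) {X : ℕ → E}
    (hX : ∀ k, X (k + 1) = X k - γ • T (X k)) (n : ℕ) :
    γ / c * ∑ k ∈ Finset.range n, ‖T (X k)‖ ^ 2 ≤ ‖X 0 - xs‖ ^ 2 := by
  rw [Finset.mul_sum]
  calc ∑ k ∈ Finset.range n, γ / c * ‖T (X k)‖ ^ 2
      ≤ ∑ k ∈ Finset.range n, (‖X k - xs‖ ^ 2 - ‖X (k + 1) - xs‖ ^ 2) :=
        Finset.sum_le_sum fun k _ => by
          rw [hX k]; linarith [hT.norm_sub_smul_sub_sq_add_le hc hxs hγ hγc (X k)]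
    _ = ‖X 0 - xs‖ ^ 2 - ‖X n - xs‖ ^ 2 := Finset.sum_range_sub' _ n
    _ ≤ ‖X 0 - xs‖ ^ 2 := sub_le_self _ (sq_nonneg _)

end CocoerciveWith

theorem cocoerciveWith_two_sub_of_nonexpansive {D : E → E}
    (hD : ∀ x y, ‖D x - D y‖ ≤ ‖x - y‖) :
    CocoerciveWith 2 (fun x => x - D x) := by
  intro x y
  have hdiff : x - D x - (y - D y) = (x - y) - (D x - D y) := by abel
  rw [hdiff, inner_sub_left, norm_sub_sq_real, real_inner_self_eq_norm_sq, real_inner_comm]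
  nlinarith [hD x y, norm_nonneg (D x - D y)]

section Gradient

variable [CompleteSpace E]

theorem HasGradientAt.hasDerivAt_comp_add_smul {f : E → ℝ} {f' x d : E} {t : ℝ}
    (h : HasGradientAt f f' (x + t • d)) :
    HasDerivAt (fun s : ℝ => f (x + s • d)) ⟪f', d⟫ t := by
  have hline : HasDerivAt (fun s : ℝ => x + s • d) d t := by
    simpa using ((hasDerivAt_id t).smul_const d).const_add x
  simpa [Function.comp_def] using h.hasFDerivAt.comp_hasDerivAt t hline

variable {f : E → ℝ} {f' : E → E} {L : ℝ}

theorem ConvexOn.inner_le_sub_of_hasGradientAt (hf : ConvexOn ℝ Set.univ f) {x g : E}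
    (hg : HasGradientAt f g x) (y : E) : ⟪g, y - x⟫ ≤ f y - f x := by
  have hline : ConvexOn ℝ Set.univ (fun t : ℝ => f (x + t • (y - x))) := by
    simpa [Function.comp_def, AffineMap.lineMap_apply, add_comm] using
      hf.comp_affineMap (AffineMap.lineMap x y)
  have hderiv : HasDerivAt (fun t : ℝ => f (x + t • (y - x))) ⟪g, y - x⟫ 0 :=
    HasGradientAt.hasDerivAt_comp_add_smul (by simpa using hg)
  simpa [slope_def_field] using
    hline.le_slope_of_hasDerivAt (Set.mem_univ 0) (Set.mem_univ 1) one_pos hderiv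

theorem le_add_inner_add_sq_of_lipschitz_gradient (hf : ∀ z, HasGradientAt f (f' z) z)
    (hlip : ∀ a b, ‖f' a - f' b‖ ≤ L * ‖a - b‖) (x y : E) :
    f y ≤ f x + ⟪f' x, y - x⟫ + L / 2 * ‖y - x‖ ^ 2 := by
  set d := y - x
  set φ : ℝ → ℝ := fun t => f (x + t • d) - t * ⟪f' x, d⟫ - L / 2 * ‖d‖ ^ 2 * t ^ 2
  have hφ : ∀ t, HasDerivAt φ (⟪f' (x + t • d), d⟫ - ⟪f' x, d⟫ - L * ‖d‖ ^ 2 * t) t := by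
    intro t
    have h := (((hf (x + t • d)).hasDerivAt_comp_add_smul).sub
      ((hasDerivAt_id t).mul_const ⟪f' x, d⟫)).sub
      ((hasDerivAt_pow 2 t).const_mul (L / 2 * ‖d‖ ^ 2))
    exact h.congr_deriv (by norm_num; ring)
  have hφ' : ∀ t ∈ interior (Set.Icc (0 : ℝ) 1),
      ⟪f' (x + t • d), d⟫ - ⟪f' x, d⟫ - L * ‖d‖ ^ 2 * t ≤ 0 := by
    intro t ht
    rw [interior_Icc] at ht
    have hnorm : ‖f' (x + t • d) - f' x‖ ≤ L * (t * ‖d‖) := by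
      simpa [norm_smul, abs_of_pos ht.1] using hlip (x + t • d) x
    rw [← inner_sub_left, sub_nonpos]
    calc ⟪f' (x + t • d) - f' x, d⟫
        ≤ ‖f' (x + t • d) - f' x‖ * ‖d‖ := real_inner_le_norm _ _
      _ ≤ L * (t * ‖d‖) * ‖d‖ := by gcongr
      _ = L * ‖d‖ ^ 2 * t := by ring
  have hanti : AntitoneOn φ (Set.Icc 0 1) :=
    antitoneOn_of_hasDerivWithinAt_nonpos (convex_Icc 0 1)
      (fun t _ => (hφ t).continuousAt.continuousWithinAt)
      (fun t _ => (hφ t).hasDerivWithinAt) hφ'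
  have h01 :=
    hanti (Set.left_mem_Icc.2 zero_le_one) (Set.right_mem_Icc.2 zero_le_one) zero_le_one
  simp only [φ, d, one_smul, zero_smul, add_zero, add_sub_cancel] at h01
  linarith

theorem ConvexOn.add_inner_add_sq_le_of_lipschitz_gradient (hconv : ConvexOn ℝ Set.univ f)
    (hL : 0 < L) (hf : ∀ z, HasGradientAt f (f' z) z)
    (hlip : ∀ a b, ‖f' a - f' b‖ ≤ L * ‖a - b‖) (x y : E) :
    f y + ⟪f' y, x - y⟫ + 1 / (2 * L) * ‖f' x - f' y‖ ^ 2 ≤ f x := by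
  set w := f' x - f' y
  -- compare `f` at `y` and at the gradient step `z` from `x`
  set z := x - L⁻¹ • w
  have hsupport := hconv.inner_le_sub_of_hasGradientAt (hf y) z
  have hdescent := le_add_inner_add_sq_of_lipschitz_gradient hf hlip x z
  have hzy : z - y = (x - y) - L⁻¹ • w := by simp only [z]; abel
  have hzx : z - x = -(L⁻¹ • w) := by simp only [z]; abel
  rw [hzy, inner_sub_right, real_inner_smul_right] at hsupport
  rw [hzx, inner_neg_right, real_inner_smul_right, norm_neg, norm_smul, Real.norm_eq_abs,
    abs_of_pos (inv_pos.2 hL)] at hdescent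
  have hw : ⟪f' x, w⟫ - ⟪f' y, w⟫ = ‖w‖ ^ 2 := by
    rw [← inner_sub_left, real_inner_self_eq_norm_sq]
  have hcoef : L / 2 * (L⁻¹ * ‖w‖) ^ 2 = 1 / (2 * L) * ‖w‖ ^ 2 := by
    field_simp
  linear_combination hsupport + hdescent - L⁻¹ * hw + hcoef

theorem ConvexOn.cocoerciveWith_of_lipschitz_gradient (hconv : ConvexOn ℝ Set.univ f)
    (hL : 0 < L) (hf : ∀ z, HasGradientAt f (f' z) z)
    (hlip : ∀ a b, ‖f' a - f' b‖ ≤ L * ‖a - b‖) : CocoerciveWith L f' := by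
  intro x y
  have hxy := hconv.add_inner_add_sq_le_of_lipschitz_gradient hL hf hlip x y
  have hyx := hconv.add_inner_add_sq_le_of_lipschitz_gradient hL hf hlip y x
  rw [norm_sub_rev (f' y)] at hyx
  have hinner : ⟪f' x - f' y, x - y⟫ = -(⟪f' y, x - y⟫ + ⟪f' x, y - x⟫) := by
    rw [inner_sub_left, ← neg_sub x y, inner_neg_right]; ring
  have hsum : 1 / L * ‖f' x - f' y‖ ^ 2 ≤ ⟪f' x - f' y, x - y⟫ := by
    have hhalf : 1 / L * ‖f' x - f' y‖ ^ 2 = 2 * (1 / (2 * L) * ‖f' x - f' y‖ ^ 2) := by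
      ring
    rw [hinner]; linarith
  calc ‖f' x - f' y‖ ^ 2 = L * (1 / L * ‖f' x - f' y‖ ^ 2) := by field_simp
    _ ≤ L * ⟪f' x - f' y, x - y⟫ := by gcongr

end Gradient

/-- For empty `ι` both sides are the junk value `0`. -/
theorem Real.iInf_le_sum_div_card {ι : Type*} [Fintype ι] (f : ι → ℝ) :
    ⨅ i, f i ≤ (∑ i, f i) / Fintype.card ι := by
  cases isEmpty_or_nonempty ι
  · simp
  · rw [le_div_iff₀ (by exact_mod_cast Fintype.card_pos), mul_comm, ← nsmul_eq_mul]
    exact Finset.card_nsmul_le_sum _ _ _ fun i _ => ciInf_le (Set.finite_range f).bddBelow i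

theorem red_full_gradient_convergence_general (N : ℕ)
    (g : EuclideanSpace ℝ (Fin N) → ℝ)
    (D : EuclideanSpace ℝ (Fin N) → EuclideanSpace ℝ (Fin N))
    (L τ : ℝ) (hL : 0 < L) (hτ : 0 < τ)
    (hg_conv : ConvexOn ℝ Set.univ g) (hg_diff : ContDiff ℝ 1 g)
    (hg_lip : ∀ x y, ‖gradient g x - gradient g y‖ ≤ L * ‖x - y‖)
    (hD : ∀ x y, ‖D x - D y‖ ≤ ‖x - y‖)
    (G : EuclideanSpace ℝ (Fin N) → EuclideanSpace ℝ (Fin N))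
    (hG : ∀ x, G x = gradient g x + τ • (x - D x))
    (x0 xs : EuclideanSpace ℝ (Fin N)) (R0 : ℝ)
    (hxs : G xs = 0) (hR0 : ‖x0 - xs‖ ≤ R0)
    (γ : ℝ) (hγ : 0 < γ) (hγ' : γ ≤ 1 / (L + 2 * τ))
    (X : ℕ → EuclideanSpace ℝ (Fin N))
    (hX0 : X 0 = x0) (hX : ∀ k, X (k + 1) = X k - γ • G (X k))
    (t : ℕ) :
    (⨅ k : Fin t, ‖G (X k)‖ ^ 2) ≤ (1 / (t : ℝ)) * ∑ k : Fin t, ‖G (X k)‖ ^ 2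
    ∧ (1 / (t : ℝ)) * ∑ k : Fin t, ‖G (X k)‖ ^ 2
      ≤ ((L + 2 * τ) / (γ * t)) * R0 ^ 2 := by
  have hgrad : ∀ z, HasGradientAt g (gradient g z) z :=
    fun z => (hg_diff.differentiable one_ne_zero z).hasGradientAt
  have hG_coco : CocoerciveWith (L + 2 * τ) G := by
    have h := (hg_conv.cocoerciveWith_of_lipschitz_gradient hL hgrad hg_lip).add hL
      (by positivity) ((cocoerciveWith_two_sub_of_nonexpansive hD).smul τ)
    rw [mul_comm τ 2] at h
    convert h using 1
    funext x
    simp [hG]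
  have hsum := hG_coco.sum_range_norm_sq_le (by positivity) hxs hγ.le hγ' hX t
  rw [← Fin.sum_univ_eq_sum_range, hX0] at hsum
  refine ⟨by simpa [div_eq_inv_mul] using
    Real.iInf_le_sum_div_card fun k : Fin t => ‖G (X k)‖ ^ 2, ?_⟩
  have hS : ∑ k : Fin t, ‖G (X k)‖ ^ 2 ≤ (L + 2 * τ) / γ * R0 ^ 2 :=
    calc ∑ k : Fin t, ‖G (X k)‖ ^ 2
        = (L + 2 * τ) / γ * (γ / (L + 2 * τ) * ∑ k : Fin t, ‖G (X k)‖ ^ 2) := by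
          field_simp
      _ ≤ (L + 2 * τ) / γ * R0 ^ 2 := by
        gcongr; exact hsum.trans (pow_le_pow_left₀ (norm_nonneg _) hR0 2)
  calc 1 / (t : ℝ) * ∑ k : Fin t, ‖G (X k)‖ ^ 2
      ≤ 1 / (t : ℝ) * ((L + 2 * τ) / γ * R0 ^ 2) := by gcongr
    _ = (L + 2 * τ) / (γ * t) * R0 ^ 2 := by ring

/-- full-gradient RED convergence (the `b = 1` case). -/
theorem red_full_gradient_convergence (N : ℕ)
    (g : EuclideanSpace ℝ (Fin N) → ℝ)
    (D : EuclideanSpace ℝ (Fin N) → EuclideanSpace ℝ (Fin N))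
    (L τ : ℝ) (hL : 0 < L) (hτ : 0 < τ)
    (hg_conv : ConvexOn ℝ Set.univ g) (hg_diff : ContDiff ℝ 1 g)
    (hg_lip : ∀ x y, ‖gradient g x - gradient g y‖ ≤ L * ‖x - y‖)
    (hD : ∀ x y, ‖D x - D y‖ ≤ ‖x - y‖)
    (G : EuclideanSpace ℝ (Fin N) → EuclideanSpace ℝ (Fin N))
    (hG : ∀ x, G x = gradient g x + τ • (x - D x))
    (x0 xs : EuclideanSpace ℝ (Fin N)) (R0 : ℝ)
    (hxs : G xs = 0) (hR0 : ‖x0 - xs‖ ≤ R0)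
    (γ : ℝ) (hγ : 0 < γ) (hγ' : γ ≤ 1 / (L + 2 * τ))
    (X : ℕ → EuclideanSpace ℝ (Fin N))
    (hX0 : X 0 = x0) (hX : ∀ k, X (k + 1) = X k - γ • G (X k))
    (t : ℕ) (ht : 1 ≤ t) :
    (⨅ k : Fin t, ‖G (X k)‖ ^ 2) ≤ (1 / (t : ℝ)) * ∑ k : Fin t, ‖G (X k)‖ ^ 2
    ∧ (1 / (t : ℝ)) * ∑ k : Fin t, ‖G (X k)‖ ^ 2
      ≤ ((L + 2 * τ) / (γ * t)) * R0 ^ 2 :=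
  red_full_gradient_convergence_general N g D L τ hL hτ hg_conv hg_diff hg_lip hD G hG x0 xs R0 hxs
    hR0 γ hγ hγ' X hX0 hX t
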